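/- Let n ≥ 2 be an integer and let S be a digitally convex set of P_{n−1} □ P_2 that contains no vertex whose first coordinate is n−2 (the last vertex of P_{n−1}). Then S, regarded as a subset of the vertices of P_n □ P_2 via the natural inclusion of {0,...,n−2} × {0,1} into {0,...,n−1} × {0,1}, is a digitally convex set of P_n □ P_2. -/
import Mathlib


open SimpleGraph

/-- `N[S]`: the union of closed neighbourhoods of the vertices of `S`. -/
def closedNbhd {V : Type*} (G : SimpleGraph V) (S : Set V) : Set V :=
  ⋃ v ∈ S, insert v (G.neighborSet v)

/-- A set `S` is digitally convex in `G` if every vertex `v` with `N[v] ⊆ N[S]`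
belongs to `S`. -/
def DigConvex {V : Type*} (G : SimpleGraph V) (S : Set V) : Prop :=
  ∀ v : V, insert v (G.neighborSet v) ⊆ closedNbhd G S → v ∈ S

/-- `n_D(G)`: the number of digitally convex sets of `G`. -/
noncomputable def nD {V : Type*} (G : SimpleGraph V) : ℕ :=
  Nat.card {S : Set V // DigConvex G S}

/-- The path graph `P_n` on vertices `{0, 1, …, n-1}`, with `i` adjacent to `i+1`. -/
def pathG (n : ℕ) : SimpleGraph (Fin n) :=
  SimpleGraph.fromRel (fun i j => (i : ℕ) + 1 = (j : ℕ))

lemma pathG_adj {n : ℕ} (a b : Fin n) :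
    (pathG n).Adj a b ↔ ((a : ℕ) + 1 = b ∨ (b : ℕ) + 1 = a) := by
  constructor
  · rintro ⟨_, h⟩; exact h
  · intro h
    refine ⟨fun e => ?_, h⟩
    subst e; omega

lemma mem_closedNbhd {V : Type*} (G : SimpleGraph V) (S : Set V) (w : V) :
    w ∈ closedNbhd G S ↔ ∃ s ∈ S, w = s ∨ G.Adj s w := by
  simp [closedNbhd, SimpleGraph.mem_neighborSet]

/-- If `S` is a digitally convex set of `P_{n-1} □ P_2` containing no vertex whose
first coordinate is `n-2` (the last vertex of `P_{n-1}`), then `S`, regarded via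
the natural inclusion as a subset of the vertices of `P_n □ P_2`, is a digitally
convex set of `P_n □ P_2`. -/
theorem digConvex_extend_path_boxProd (n : ℕ) (hn : 2 ≤ n)
    (S : Set (Fin (n - 1) × Fin 2))
    (hS : DigConvex (pathG (n - 1) □ pathG 2) S)
    (hlast : ∀ p ∈ S, (p.1 : ℕ) ≠ n - 2) :
    DigConvex (pathG n □ pathG 2)
      ((fun p : Fin (n - 1) × Fin 2 => (Fin.castLE (Nat.sub_le n 1) p.1, p.2)) '' S) := by
  set f : Fin (n - 1) × Fin 2 → Fin n × Fin 2 :=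
    fun p => (Fin.castLE (Nat.sub_le n 1) p.1, p.2) with hf
  intro v hv
  have key : ∀ w ∈ closedNbhd (pathG n □ pathG 2) (f '' S),
      (w.1 : ℕ) < n - 1 ∧
      ∀ (hw : (w.1 : ℕ) < n - 1),
        ((⟨⟨w.1, hw⟩, w.2⟩ : Fin (n - 1) × Fin 2) ∈
          closedNbhd (pathG (n - 1) □ pathG 2) S) := by
    intro w hwmem
    rw [mem_closedNbhd] at hwmem
    obtain ⟨s, hs, hcase⟩ := hwmem
    obtain ⟨p, hp, rfl⟩ := hs
    have hp2 : (p.1 : ℕ) < n - 2 := by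
      have h1 := hlast p hp
      have h2 := p.1.isLt
      omega
    rcases hcase with rfl | hadj
    · refine ⟨by simpa [f] using p.1.isLt, fun hw => ?_⟩
      rw [mem_closedNbhd]
      refine ⟨p, hp, Or.inl ?_⟩
      ext <;> simp [f]
    · rw [SimpleGraph.boxProd_adj] at hadj
      rcases hadj with ⟨h1, h2⟩ | ⟨h1, h2⟩
      · rw [pathG_adj] at h1
        simp only [f, Fin.coe_castLE] at h1 h2
        have hw1 : (w.1 : ℕ) < n - 1 := by omega
        refine ⟨hw1, fun hw => ?_⟩
        rw [mem_closedNbhd]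
        refine ⟨p, hp, Or.inr ?_⟩
        rw [SimpleGraph.boxProd_adj]
        left
        exact ⟨(pathG_adj _ _).2 (by simpa using h1), by simp [← h2]⟩
      · rw [pathG_adj] at h1
        have heq : (w.1 : ℕ) = (p.1 : ℕ) := by
          rw [← h2]; simp [f]
        have hw1 : (w.1 : ℕ) < n - 1 := by omega
        refine ⟨hw1, fun hw => ?_⟩
        rw [mem_closedNbhd]
        refine ⟨p, hp, Or.inr ?_⟩
        rw [SimpleGraph.boxProd_adj]
        right
        refine ⟨(pathG_adj _ _).2 (by simpa [f] using h1), ?_⟩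
        ext
        simp [heq]
  have hv0 := key v (hv (Set.mem_insert _ _))
  have hvlt : (v.1 : ℕ) < n - 2 := by
    by_contra hc
    have hv1 : (v.1 : ℕ) = n - 2 := by have := hv0.1; omega
    have hlt : (v.1 : ℕ) + 1 < n := by omega
    have hadj : (pathG n □ pathG 2).Adj v (⟨(v.1 : ℕ) + 1, hlt⟩, v.2) := by
      rw [SimpleGraph.boxProd_adj]; left
      exact ⟨(pathG_adj _ _).2 (Or.inl rfl), rfl⟩
    have := (key _ (hv (Set.mem_insert_of_mem _ hadj))).1
    simp at this
    omega
  have hvlt' : (v.1 : ℕ) < n - 1 := by omega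
  set v' : Fin (n - 1) × Fin 2 := (⟨(v.1 : ℕ), hvlt'⟩, v.2) with hv'
  have hv'S : v' ∈ S := by
    apply hS
    intro w' hw'
    have hmem : f w' ∈ insert v ((pathG n □ pathG 2).neighborSet v) := by
      rcases hw' with rfl | hadj
      · left; ext <;> simp [f, v']
      · right
        rw [SimpleGraph.mem_neighborSet] at hadj ⊢
        rw [SimpleGraph.boxProd_adj] at hadj ⊢
        rcases hadj with ⟨h1, h2⟩ | ⟨h1, h2⟩
        · left
          rw [pathG_adj] at h1 ⊢
          constructor
          · simpa [f, v'] using h1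
          · simpa [f, v'] using h2
        · right
          rw [pathG_adj] at h1 ⊢
          refine ⟨by simpa [f, v'] using h1, ?_⟩
          ext
          have : (v'.1 : ℕ) = (w'.1 : ℕ) := by rw [h2]
          simpa [f, v'] using this
    have hk := key (f w') (hv hmem)
    have h2 := hk.2 (by simpa [f] using w'.1.isLt)
    have hcast : (⟨⟨((f w').1 : ℕ), by simpa [f] using w'.1.isLt⟩, (f w').2⟩ :
        Fin (n - 1) × Fin 2) = w' := by
      ext <;> simp [f]
    rwa [hcast] at h2
  exact ⟨v', hv'S, by ext <;> simp [f, v']⟩
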